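/- arXiv:2512.22809 — 4 statements merged into one kernel-verified Lean document; each statement's English description precedes it below -/
import Mathlib

section
/- If a graph G admits an (s_1, s_2, ..., s_k)-packing coloring, then the subdivision S(G) of G admits a (1, 2s_1+1, 2s_2+1, ..., 2s_k+1)-packing coloring. -/
def IsPackingColoring {V : Type*} (G : SimpleGraph V) {k : ℕ} (s : Fin k → ℕ)
    (f : V → Fin k) : Prop :=
  ∀ u v : V, u ≠ v → f u = f v → G.Reachable u v → s (f u) + 1 ≤ G.dist u v

/-- The subdivision `S(G)` of `G`: each edge `uv` is replaced by a path `u-w-v`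
through a new vertex `w` (one new vertex per edge of `G`). -/
def subdivision {V : Type*} (G : SimpleGraph V) : SimpleGraph (V ⊕ G.edgeSet) :=
  SimpleGraph.fromRel (fun x y =>
    match x, y with
    | Sum.inl u, Sum.inr e => u ∈ (e.1 : Sym2 V)
    | _, _ => False)

/-! A walk in `S(G)` between original vertices alternates between original and new vertices,
and each detour `u - e - w` through a new vertex is either a back-step (`u = w`) or an edge
`uw` of `G`; so it projects to a walk in `G` of at most half its length. Hence distances between
original vertices at least double, and new vertices get the extra colour `1`, since no two of
them are adjacent. -/

namespace SimpleGraph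

variable {V : Type*} {G : SimpleGraph V}

@[simp]
lemma subdivision_adj_inl_inl {u v : V} : ¬(subdivision G).Adj (.inl u) (.inl v) := by
  simp [subdivision]

@[simp]
lemma subdivision_adj_inr_inr {e e' : G.edgeSet} : ¬(subdivision G).Adj (.inr e) (.inr e') := by
  simp [subdivision]

@[simp]
lemma subdivision_adj_inl_inr {u : V} {e : G.edgeSet} :
    (subdivision G).Adj (.inl u) (.inr e) ↔ u ∈ (e : Sym2 V) := by
  simp [subdivision]

lemma Walk.exists_two_mul_length_le_of_subdivision :
    ∀ {u v : V} (p : (subdivision G).Walk (.inl u) (.inl v)),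
      ∃ q : G.Walk u v, 2 * q.length ≤ p.length
  | _, _, .nil => ⟨.nil, by simp⟩
  | _, _, .cons (v := .inl _) h _ => absurd h subdivision_adj_inl_inl
  | _, _, .cons (v := .inr _) _ (.cons (v := .inr _) h _) => absurd h subdivision_adj_inr_inr
  | u, _, .cons (v := .inr e) h (.cons (v := .inl w) h' p) => by
    obtain ⟨q, hq⟩ := exists_two_mul_length_le_of_subdivision p
    by_cases huw : u = w
    · subst huw
      exact ⟨q, by simp only [length_cons]; omega⟩
    · have hadj : G.Adj u w := G.adj_iff_exists_edge.mpr
        ⟨huw, e, e.2, subdivision_adj_inl_inr.mp h, subdivision_adj_inl_inr.mp h'.symm⟩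
      exact ⟨.cons hadj q, by simp only [length_cons]; omega⟩

variable {u v : V}

lemma Reachable.of_subdivision (h : (subdivision G).Reachable (.inl u) (.inl v)) :
    G.Reachable u v :=
  let ⟨p⟩ := h
  ⟨(Walk.exists_two_mul_length_le_of_subdivision p).choose⟩

lemma two_mul_dist_le_dist_subdivision (h : (subdivision G).Reachable (.inl u) (.inl v)) :
    2 * G.dist u v ≤ (subdivision G).dist (.inl u) (.inl v) := by
  obtain ⟨p, hp⟩ := h.exists_walk_length_eq_dist
  obtain ⟨q, hq⟩ := Walk.exists_two_mul_length_le_of_subdivision p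
  have := G.dist_le q
  omega

lemma Reachable.two_le_dist (h : G.Reachable u v) (hne : u ≠ v) (hnadj : ¬G.Adj u v) :
    2 ≤ G.dist u v := by
  have h0 : G.dist u v ≠ 0 := dist_ne_zero_iff_ne_and_reachable.mpr ⟨hne, h⟩
  have h1 : G.dist u v ≠ 1 := fun h1 => hnadj (dist_eq_one_iff_adj.mp h1)
  omega

end SimpleGraph

open SimpleGraph in
/-- If `G` is `(s₁,…,s_k)`-packing colorable, then `S(G)` is
`(1, 2s₁+1, …, 2s_k+1)`-packing colorable. -/
theorem subdivision_packing {V : Type*} (G : SimpleGraph V) {k : ℕ} (s : Fin k → ℕ)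
    (h : ∃ f : V → Fin k, IsPackingColoring G s f) :
    ∃ g : V ⊕ G.edgeSet → Fin (k + 1),
      IsPackingColoring (subdivision G) (Fin.cons 1 (fun i => 2 * s i + 1)) g := by
  obtain ⟨f, hf⟩ := h
  refine ⟨Sum.elim (Fin.succ ∘ f) (fun _ => 0), ?_⟩
  rintro (u | e) (v | e') hne hcol hreach
  · have hfuv := hf u v (fun huv => hne (congrArg _ huv)) (Fin.succ_injective _ hcol)
      hreach.of_subdivision
    have hdist := two_mul_dist_le_dist_subdivision hreach
    simp only [Sum.elim_inl, Function.comp_apply, Fin.cons_succ]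
    omega
  · exact absurd hcol (Fin.succ_ne_zero _)
  · exact absurd hcol (Fin.succ_ne_zero _).symm
  · simpa using hreach.two_le_dist hne subdivision_adj_inr_inr
end

section
/- If a subcubic graph G admits a (1,1,2,2)-packing coloring, then its subdivision S(G) has packing chromatic number at most 5, i.e., S(G) admits a (1,2,3,4,5)-packing coloring. -/
section

variable {V : Type*} {G : SimpleGraph V}

theorem IsPackingColoring.mono {k : ℕ} {s s' : Fin k → ℕ} {f : V → Fin k}
    (hf : IsPackingColoring G s f) (hs : ∀ i, s' i ≤ s i) : IsPackingColoring G s' f :=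
  fun u v huv hfuv hr => (Nat.succ_le_succ (hs _)).trans (hf u v huv hfuv hr)

@[simp]
theorem subdivision_adj_inl_inl (u w : V) : ¬(subdivision G).Adj (Sum.inl u) (Sum.inl w) := by
  simp [subdivision]

@[simp]
theorem subdivision_adj_inr_inr (e e' : G.edgeSet) :
    ¬(subdivision G).Adj (Sum.inr e) (Sum.inr e') := by
  simp [subdivision]

@[simp]
theorem subdivision_adj_inl_inr (u : V) (e : G.edgeSet) :
    (subdivision G).Adj (Sum.inl u) (Sum.inr e) ↔ u ∈ (e : Sym2 V) := by
  simp [subdivision]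

@[simp]
theorem subdivision_adj_inr_inl (u : V) (e : G.edgeSet) :
    (subdivision G).Adj (Sum.inr e) (Sum.inl u) ↔ u ∈ (e : Sym2 V) := by
  rw [SimpleGraph.adj_comm, subdivision_adj_inl_inr]

/-- The second clause, for walks starting at a subdivision vertex, is what makes the induction
go through. -/
theorem exists_walk_of_subdivision_walk {x b : V ⊕ G.edgeSet} (p : (subdivision G).Walk x b)
    {v : V} (hb : b = Sum.inl v) :
    (∀ u, x = Sum.inl u → ∃ q : G.Walk u v, 2 * q.length ≤ p.length) ∧
      ∀ e : G.edgeSet, x = Sum.inr e →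
        ∃ w ∈ (e : Sym2 V), ∃ q : G.Walk w v, 2 * q.length + 1 ≤ p.length := by
  induction p with
  | nil =>
    subst hb
    refine ⟨fun u hu => ?_, fun e he => nomatch he⟩
    cases Sum.inl.inj hu
    exact ⟨.nil, le_rfl⟩
  | @cons x c b hxc p ih =>
    obtain ⟨ihl, ihr⟩ := ih hb
    refine ⟨fun u hu => ?_, fun e he => ?_⟩
    · subst hu
      rcases c with w | e
      · exact absurd hxc (subdivision_adj_inl_inl u w)
      obtain ⟨w, hwe, q, hq⟩ := ihr e rfl
      have hue : u ∈ (e : Sym2 V) := (subdivision_adj_inl_inr u e).1 hxc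
      by_cases huw : u = w
      · subst huw
        exact ⟨q, by simp only [SimpleGraph.Walk.length_cons]; omega⟩
      · have hadj : G.Adj u w := by
          simpa [(Sym2.mem_and_mem_iff huw).1 ⟨hue, hwe⟩] using e.2
        exact ⟨.cons hadj q, by simp only [SimpleGraph.Walk.length_cons]; omega⟩
    · subst he
      rcases c with w | e'
      · obtain ⟨q, hq⟩ := ihl w rfl
        exact ⟨w, (subdivision_adj_inr_inl w e).1 hxc, q,
          by simp only [SimpleGraph.Walk.length_cons]; omega⟩
      · exact absurd hxc (subdivision_adj_inr_inr e e')

theorem reachable_of_subdivision_reachable {u v : V}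
    (hr : (subdivision G).Reachable (Sum.inl u) (Sum.inl v)) : G.Reachable u v := by
  obtain ⟨p⟩ := hr
  obtain ⟨q, -⟩ := (exists_walk_of_subdivision_walk p rfl).1 u rfl
  exact ⟨q⟩

theorem two_mul_dist_le_subdivision_dist {u v : V}
    (hr : (subdivision G).Reachable (Sum.inl u) (Sum.inl v)) :
    2 * G.dist u v ≤ (subdivision G).dist (Sum.inl u) (Sum.inl v) := by
  obtain ⟨p, hp⟩ := hr.exists_walk_length_eq_dist
  obtain ⟨q, hq⟩ := (exists_walk_of_subdivision_walk p rfl).1 u rfl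
  have := G.dist_le q
  omega

theorem IsPackingColoring.subdivision {k : ℕ} {s : Fin k → ℕ} {f : V → Fin k}
    (hf : IsPackingColoring G s f) :
    IsPackingColoring (subdivision G) (Fin.cons 1 fun i => 2 * s i + 1)
      (Sum.elim (fun v => (f v).succ) fun _ => 0) := by
  rintro (u | e) (v | e') hne hcol hr
  · have huv : u ≠ v := fun h => hne (congrArg _ h)
    have hfuv : f u = f v := Fin.succ_injective _ hcol
    have hG := hf u v huv hfuv (reachable_of_subdivision_reachable hr)
    have hS := two_mul_dist_le_subdivision_dist hr
    simp only [Sum.elim_inl, Fin.cons_succ]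
    omega
  · exact absurd hcol (Fin.succ_ne_zero _)
  · exact absurd hcol.symm (Fin.succ_ne_zero _)
  · exact hr.one_lt_dist_of_ne_of_not_adj hne (subdivision_adj_inr_inr e e')

end

theorem subcubic_packing_chromatic_subdivision_general {V : Type*} (G : SimpleGraph V)
    (h : ∃ f : V → Fin 4, IsPackingColoring G ![1, 1, 2, 2] f) :
    ∃ g : V ⊕ G.edgeSet → Fin 5, IsPackingColoring (subdivision G) ![1, 2, 3, 4, 5] g := by
  obtain ⟨f, hf⟩ := h
  have h13355 : IsPackingColoring (subdivision G) ![1, 3, 3, 5, 5]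
      (Sum.elim (fun v => (f v).succ) fun _ => 0) := by
    convert hf.subdivision using 1
    funext i
    fin_cases i <;> rfl
  exact ⟨_, h13355.mono (by decide)⟩

/-- If a subcubic graph `G` admits a `(1,1,2,2)`-packing coloring, then its
subdivision `S(G)` admits a `(1,2,3,4,5)`-packing coloring, i.e. `χ_p(S(G)) ≤ 5`. -/
theorem subcubic_packing_chromatic_subdivision {V : Type*} (G : SimpleGraph V)
    (hdeg : ∀ v : V, (G.neighborSet v).ncard ≤ 3)
    (h : ∃ f : V → Fin 4, IsPackingColoring G ![1, 1, 2, 2] f) :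
    ∃ g : V ⊕ G.edgeSet → Fin 5, IsPackingColoring (subdivision G) ![1, 2, 3, 4, 5] g :=
  subcubic_packing_chromatic_subdivision_general G h
end

section
/- Let G be a Halin graph with maximum degree at most 5, with characteristic tree T and adjoint cycle C = a_1 a_2 ... a_n a_1, and for each i let b_i be the unique neighbor of a_i in T. Then for every vertex b of T, the number of cycle vertices a_j adjacent to b that lie in a fixed color class assigned only colors from {2_a, 2_b, 2_c} under the recoloring algorithm is at most 3; more precisely, any vertex b_i has at most 3 neighbors among the recolored (color-2) cycle vertices, because if b_i had 4 such neighbors a_i, a_j, a_k, a_l with i<j<k<l, at most one of the gaps j−i, k−j, l−k equals 1, forcing two internal tree paths from b_i and hence degree at least 6. -/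
/-- `IsHalin G T a` : `G` is a Halin graph with characteristic tree `T` and
adjoint cycle `a 0, a 1, …, a (n-1)` through the leaves of `T`, listed in the
cyclic order of a planar embedding.  Planarity of the embedding is recorded by
the field `planar`: for every oriented tree edge `(u,v)`, the leaves lying in
the component of `v` after deleting that edge form a cyclic interval (arc) of
the cyclic order `a`. -/
structure IsHalin {V : Type*} (G T : SimpleGraph V) {n : ℕ} [NeZero n]
    (a : Fin n → V) : Prop where
  /-- `T` is a (spanning) tree. -/
  tree : T.IsTree
  /-- `T` is a subgraph of `G`. -/
  tree_le : T ≤ G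
  /-- The tree has at least 4 vertices. -/
  card_ge : 4 ≤ Nat.card V
  /-- `T` has no vertex of degree 2. -/
  no_deg2 : ∀ v : V, (T.neighborSet v).ncard ≠ 2
  /-- The cycle vertices are pairwise distinct. -/
  a_inj : Function.Injective a
  /-- The vertices `a i` are exactly the leaves of `T`. -/
  leaves : ∀ v : V, (T.neighborSet v).ncard = 1 ↔ v ∈ Set.range a
  /-- Consecutive leaves are joined by the adjoint cycle. -/
  cycle_adj : ∀ i : Fin n, G.Adj (a i) (a (i + 1))
  /-- Every edge of `G` is a tree edge or an adjoint-cycle edge. -/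
  edge_cases : ∀ u v : V, G.Adj u v → T.Adj u v ∨
      ∃ i : Fin n, (u = a i ∧ v = a (i + 1)) ∨ (v = a i ∧ u = a (i + 1))
  /-- Planarity: for each oriented tree edge `(u,v)`, the leaves on the `v`-side
  of the edge form a cyclic interval of the cyclic order `a`. -/
  planar : ∀ u v : V, T.Adj u v → ∃ st len : ℕ,
      {i : Fin n | (T.deleteEdges {s(u, v)}).Reachable (a i) v} =
        {i : Fin n | ∃ m : ℕ, m < len ∧ i = (Fin.ofNat n st) + (Fin.ofNat n m)}

/-!
Suppose `b` had four neighbours in `S`. Of the three gaps between the four smallest of them at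
most one has length 1, so there are `p < m₁ < q < m₂` with `p, q ∈ S` and `m₁, m₂ ∉ S`. The first
edges `b c₁`, `b c₂` of the tree paths from `b` to `a m₁` and `a m₂` end outside `a '' S`, and
`c₁ ≠ c₂`: the leaves behind a tree edge form an arc of the cycle, and no arc contains `m₁, m₂`
while avoiding `p, q`. Hence `b` has at least `|S| + 2 ≥ 6` neighbours in `G`.
-/

def Finset.AtMostOneConsecutivePair {n : ℕ} (S : Finset (Fin n)) : Prop :=
  ∀ p q p' q' : Fin n, p ∈ S → q ∈ S → p' ∈ S → q' ∈ S →
    p.val + 1 = q.val → p'.val + 1 = q'.val → p = p' ∧ q = q'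

namespace Finset.AtMostOneConsecutivePair

variable {n : ℕ} {S : Finset (Fin n)}

lemma exists_notMem_between (hS : S.AtMostOneConsecutivePair) {x y : Fin n}
    (hx : x ∈ S) (hy : y ∈ S) (hxy : x < y) (hgap : x.val + 1 ≠ y.val) :
    ∃ m ∉ S, x < m ∧ m < y := by
  by_contra! hall
  have hy' := y.isLt
  let m₁ : Fin n := ⟨x.val + 1, by omega⟩
  let m₂ : Fin n := ⟨x.val + 2, by omega⟩
  have hm₁ : m₁ ∈ S := by
    by_contra hm₁
    exact absurd (hall m₁ hm₁ (Fin.lt_def.mpr (by simp [m₁]))) (by simp [Fin.le_def, m₁]; omega)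
  have hm₂ : m₂ ∈ S := by
    by_cases hy₂ : x.val + 2 = y.val
    · rwa [show m₂ = y from Fin.ext hy₂]
    · by_contra hm₂
      exact absurd (hall m₂ hm₂ (Fin.lt_def.mpr (by simp [m₂]))) (by simp [Fin.le_def, m₂]; omega)
  have := congrArg Fin.val (hS x m₁ m₁ m₂ hx hm₁ hm₁ hm₂ rfl rfl).1
  simp [m₁] at this

lemma exists_alternating (hS : S.AtMostOneConsecutivePair) (hcard : 4 ≤ S.card) :
    ∃ p q m₁ m₂ : Fin n, p ∈ S ∧ q ∈ S ∧ m₁ ∉ S ∧ m₂ ∉ S ∧ p < m₁ ∧ m₁ < q ∧ q < m₂ := by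
  let f := S.orderEmbOfFin rfl
  have mem (t : Fin S.card) : f t ∈ S := S.orderEmbOfFin_mem rfl t
  have lt {s t : Fin S.card} (hst : s < t) : f s < f t := f.strictMono hst
  let i := f ⟨0, by omega⟩
  let j := f ⟨1, by omega⟩
  let k := f ⟨2, by omega⟩
  let l := f ⟨3, by omega⟩
  have hij : i < j := lt (by simp [Fin.lt_def])
  have hjk : j < k := lt (by simp [Fin.lt_def])
  have hkl : k < l := lt (by simp [Fin.lt_def])
  have unique_pair {x y x' y' : Fin n} (hx : x ∈ S) (hy : y ∈ S) (hx' : x' ∈ S) (hy' : y' ∈ S)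
      (hxx' : x < x') (h : x.val + 1 = y.val) : x'.val + 1 ≠ y'.val := fun h' =>
    hxx'.ne (hS x y x' y' hx hy hx' hy' h h').1
  by_cases hij₁ : i.val + 1 = j.val
  · obtain ⟨m₁, hm₁, hjm₁, hm₁k⟩ := hS.exists_notMem_between (mem _) (mem _) hjk
      (unique_pair (mem _) (mem _) (mem _) (mem _) hij hij₁)
    obtain ⟨m₂, hm₂, hkm₂, -⟩ := hS.exists_notMem_between (mem _) (mem _) hkl
      (unique_pair (mem _) (mem _) (mem _) (mem _) (hij.trans hjk) hij₁)
    exact ⟨j, k, m₁, m₂, mem _, mem _, hm₁, hm₂, hjm₁, hm₁k, hkm₂⟩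
  · obtain ⟨m₁, hm₁, him₁, hm₁j⟩ := hS.exists_notMem_between (mem _) (mem _) hij hij₁
    obtain ⟨m₂, hm₂, hjm₂⟩ : ∃ m₂ ∉ S, j < m₂ := by
      by_cases hjk₁ : j.val + 1 = k.val
      · obtain ⟨m₂, hm₂, hkm₂, -⟩ := hS.exists_notMem_between (mem _) (mem _) hkl
          (unique_pair (mem _) (mem _) (mem _) (mem _) hjk hjk₁)
        exact ⟨m₂, hm₂, hjk.trans hkm₂⟩
      · obtain ⟨m₂, hm₂, hjm₂, -⟩ := hS.exists_notMem_between (mem _) (mem _) hjk hjk₁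
        exact ⟨m₂, hm₂, hjm₂⟩
    exact ⟨i, j, m₁, m₂, mem _, mem _, hm₁, hm₂, him₁, hm₁j, hjm₂⟩

end Finset.AtMostOneConsecutivePair

def Fin.cyclicArc (n : ℕ) [NeZero n] (st len : ℕ) : Set (Fin n) :=
  {i | ∃ m : ℕ, m < len ∧ i = Fin.ofNat n st + Fin.ofNat n m}

namespace Fin

variable {n : ℕ} [NeZero n]

lemma mem_cyclicArc_iff {st len : ℕ} {x : Fin n} :
    x ∈ cyclicArc n st len ↔ (x - Fin.ofNat n st).val < len := by
  constructor
  · rintro ⟨m, hm, rfl⟩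
    rw [add_sub_cancel_left, Fin.val_ofNat]
    exact (Nat.mod_le _ _).trans_lt hm
  · intro hx
    exact ⟨(x - Fin.ofNat n st).val, hx, by rw [Fin.ofNat_val_eq_self, add_sub_cancel]⟩

lemma not_alternating_mem_cyclicArc {st len : ℕ} {p m₁ q m₂ : Fin n}
    (hpm₁ : p < m₁) (hm₁q : m₁ < q) (hqm₂ : q < m₂)
    (hp : p ∉ cyclicArc n st len) (hm₁ : m₁ ∈ cyclicArc n st len)
    (hq : q ∉ cyclicArc n st len) (hm₂ : m₂ ∈ cyclicArc n st len) : False := by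
  simp only [mem_cyclicArc_iff, not_lt] at hp hm₁ hq hm₂
  fin_omega

end Fin

namespace SimpleGraph

variable {V : Type*} {T : SimpleGraph V}

lemma Connected.exists_adj_reachable_deleteEdges (hT : T.Connected) {b w : V} (hbw : b ≠ w) :
    ∃ c, T.Adj b c ∧ (T.deleteEdges {s(b, c)}).Reachable w c := by
  classical
  obtain ⟨p, hp⟩ : ∃ p : T.Walk b w, p.IsPath := ⟨_, ((hT.preconnected b w).some.toPath).2⟩
  cases p with
  | nil => exact absurd rfl hbw
  | @cons _ c _ hbc q =>
    rw [Walk.cons_isPath_iff] at hp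
    have hq : ∀ e ∈ q.edges, e ∉ ({s(b, c)} : Set (Sym2 V)) := by
      rintro e he rfl
      exact hp.2 (q.fst_mem_support_of_mem_edges he)
    exact ⟨c, hbc, ⟨(q.toDeleteEdges _ hq).reverse⟩⟩

lemma eq_of_reachable_deleteEdges_of_forall_adj_eq {b c w : V} (hc : ∀ d, T.Adj c d → d = b)
    (hwc : (T.deleteEdges {s(b, c)}).Reachable w c) : w = c := by
  obtain ⟨p⟩ := hwc.symm
  cases p with
  | nil => rfl
  | @cons _ d _ hcd _ =>
    rw [deleteEdges_adj] at hcd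
    exact (hcd.2 (by simp [hc d hcd.1, Sym2.eq_swap])).elim

lemma IsAcyclic.not_reachable_deleteEdges (hT : T.IsAcyclic) {b c x : V}
    (hbc : T.Adj b c) (hbx : T.Adj b x) (hxc : x ≠ c) :
    ¬ (T.deleteEdges {s(b, c)}).Reachable x c := by
  intro hxc'
  refine isBridge_iff.mp (isAcyclic_iff_forall_adj_isBridge.mp hT hbc) ?_
  have hbx' : (T.deleteEdges {s(b, c)}).Adj b x := by
    simp [deleteEdges_adj, hbx, hxc, hbc.ne]
  exact hbx'.reachable.trans hxc'

end SimpleGraph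

namespace IsHalin

variable {V : Type*} {G T : SimpleGraph V} {n : ℕ} [NeZero n] {a : Fin n → V}

lemma eq_of_adj_of_adj (h : IsHalin G T a) {k : Fin n} {x y : V}
    (hx : T.Adj (a k) x) (hy : T.Adj (a k) y) : x = y := by
  obtain ⟨z, hz⟩ := Set.ncard_eq_one.mp ((h.leaves (a k)).mpr ⟨k, rfl⟩)
  have hx' : x ∈ T.neighborSet (a k) := hx
  have hy' : y ∈ T.neighborSet (a k) := hy
  rw [hz] at hx' hy'
  exact hx'.trans hy'.symm

lemma exists_adj_reachable_notMem_image [DecidableEq V] (h : IsHalin G T a) {b : V}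
    {S : Finset (Fin n)} (hadj : ∀ j ∈ S, T.Adj b (a j)) {m : Fin n} (hbm : b ≠ a m)
    (hm : m ∉ S) : ∃ c, T.Adj b c ∧ c ∉ S.image a ∧ (T.deleteEdges {s(b, c)}).Reachable (a m) c := by
  obtain ⟨c, hbc, hmc⟩ := h.tree.connected.exists_adj_reachable_deleteEdges hbm
  refine ⟨c, hbc, ?_, hmc⟩
  rintro hc
  obtain ⟨j, hj, rfl⟩ := Finset.mem_image.mp hc
  -- the leaf `a j` is isolated once its only edge `b (a j)` is deleted
  have hmj : a m = a j := SimpleGraph.eq_of_reachable_deleteEdges_of_forall_adj_eq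
    (fun _ hd => h.eq_of_adj_of_adj hd (hadj j hj).symm) hmc
  exact hm (h.a_inj hmj ▸ hj)

lemma not_reachable_of_alternating (h : IsHalin G T a) {b c : V} {p m₁ q m₂ : Fin n}
    (hbc : T.Adj b c) (hbp : T.Adj b (a p)) (hbq : T.Adj b (a q)) (hpc : a p ≠ c) (hqc : a q ≠ c)
    (hpm₁ : p < m₁) (hm₁q : m₁ < q) (hqm₂ : q < m₂)
    (hm₁c : (T.deleteEdges {s(b, c)}).Reachable (a m₁) c) :
    ¬ (T.deleteEdges {s(b, c)}).Reachable (a m₂) c := by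
  obtain ⟨st, len, hset⟩ := h.planar b c hbc
  have mem (x : Fin n) : (T.deleteEdges {s(b, c)}).Reachable (a x) c ↔
      x ∈ Fin.cyclicArc n st len := Set.ext_iff.mp hset x
  intro hm₂c
  exact Fin.not_alternating_mem_cyclicArc hpm₁ hm₁q hqm₂
    (fun hp => h.tree.isAcyclic.not_reachable_deleteEdges hbc hbp hpc ((mem p).mpr hp))
    ((mem m₁).mp hm₁c)
    (fun hq => h.tree.isAcyclic.not_reachable_deleteEdges hbc hbq hqc ((mem q).mpr hq))
    ((mem m₂).mp hm₂c)

end IsHalin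

/-- In a Halin graph with `Δ(G) ≤ 5`, any tree vertex `b` has at most 3
neighbors among a set `S` of cycle vertices in which at most one pair of
vertices is consecutive on the adjoint cycle (as is the case for the set of
neighbors of `b` receiving colors from `{2_a, 2_b, 2_c}` in the recoloring
algorithm). -/
theorem halin_at_most_three_colored_neighbors {V : Type*} (G T : SimpleGraph V)
    {n : ℕ} [NeZero n] (a : Fin n → V) (h : IsHalin G T a)
    (hdeg : ∀ v : V, (G.neighborSet v).ncard ≤ 5)
    (b : V) (S : Finset (Fin n))
    (hadj : ∀ j ∈ S, T.Adj b (a j))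
    (hcons : ∀ p q p' q' : Fin n, p ∈ S → q ∈ S → p' ∈ S → q' ∈ S →
      p.val + 1 = q.val → p'.val + 1 = q'.val → p = p' ∧ q = q') :
    S.card ≤ 3 := by
  classical
  by_contra! hS
  have : Finite V := Nat.finite_of_card_ne_zero (by have := h.card_ge; omega)
  obtain ⟨p, q, m₁, m₂, hp, hq, hm₁, hm₂, hpm₁, hm₁q, hqm₂⟩ :=
    Finset.AtMostOneConsecutivePair.exists_alternating hcons hS
  have hb (m : Fin n) : b ≠ a m := fun hbm =>
    (hpm₁.trans hm₁q).ne (h.a_inj (h.eq_of_adj_of_adj (hbm ▸ hadj p hp) (hbm ▸ hadj q hq)))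
  obtain ⟨c₁, hbc₁, hc₁, hm₁c₁⟩ := h.exists_adj_reachable_notMem_image hadj (hb m₁) hm₁
  obtain ⟨c₂, hbc₂, hc₂, hm₂c₂⟩ := h.exists_adj_reachable_notMem_image hadj (hb m₂) hm₂
  have hc₁₂ : c₁ ≠ c₂ := by
    rintro rfl
    have hne {j} (hj : j ∈ S) : a j ≠ c₁ := fun e => hc₁ (e ▸ Finset.mem_image_of_mem a hj)
    exact h.not_reachable_of_alternating hbc₁ (hadj p hp) (hadj q hq) (hne hp) (hne hq)
      hpm₁ hm₁q hqm₂ hm₁c₁ hm₂c₂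
  set N := insert c₁ (insert c₂ (S.image a))
  have hN : N.card = S.card + 2 := by
    rw [Finset.card_insert_of_notMem (by simp [hc₁₂, hc₁]), Finset.card_insert_of_notMem hc₂,
      Finset.card_image_of_injective _ h.a_inj]
  have hNb : ↑N ⊆ G.neighborSet b := by
    simp only [N, Finset.coe_insert, Finset.coe_image, Set.insert_subset_iff]
    exact ⟨h.tree_le hbc₁, h.tree_le hbc₂,
      Set.image_subset_iff.mpr fun j hj => h.tree_le (hadj j hj)⟩
  have hle := Set.ncard_le_ncard hNb
  rw [Set.ncard_coe_finset, hN] at hle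
  linarith [hdeg b]
end

section
/- Let C_n be the cycle on n vertices with n ≥ 3. Then C_n admits a partition into two independent sets and at most three 2-independent sets; i.e., C_n is (1,1,2,2,2)-packing colorable for all n ≥ 3, and moreover C_n is (1,1,2,2)-packing colorable when n ≡ 0 (mod 4). -/
/-- The cycle on `ZMod n` (for `n ≥ 3` this is the cycle `C_n`). -/
def cyc (n : ℕ) : SimpleGraph (ZMod n) :=
  SimpleGraph.fromRel (fun i j => j = i + 1)

namespace SimpleGraph

variable {V : Type*} {G : SimpleGraph V} {u v : V}

protected theorem Reachable.two_lt_dist_of_commonNeighbors_eq_empty (h : G.Reachable u v)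
    (hne : u ≠ v) (hadj : ¬G.Adj u v) (hc : G.commonNeighbors u v = ∅) : 2 < G.dist u v := by
  have := two_lt_edist_iff.mpr ⟨hne, hadj, hc⟩
  rw [← h.coe_dist_eq_edist] at this
  exact_mod_cast this

end SimpleGraph

open SimpleGraph

theorem IsPackingColoring.of_comp {V : Type*} {G : SimpleGraph V} {k m : ℕ} {s : Fin k → ℕ}
    {t : Fin m → ℕ} {f : V → Fin k} {e : Fin k → Fin m}
    (hst : ∀ i, t (e i) = s i) (h : IsPackingColoring G t (e ∘ f)) : IsPackingColoring G s f := by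
  intro u v hne hf hr
  rw [← hst]
  exact h u v hne (congrArg e hf) hr

theorem isPackingColoring_cyc {n k : ℕ} {s : Fin k → ℕ} {f : ZMod n → Fin k}
    (hs : ∀ i, s i ≤ 2) (h1 : ∀ u, f (u + 1) ≠ f u) (h2 : ∀ u, s (f u) = 2 → f (u + 2) ≠ f u) :
    IsPackingColoring (cyc n) s f := by
  intro u v hne hf hr
  have hadj : ¬(cyc n).Adj u v := by
    rintro ⟨-, rfl | rfl⟩
    exacts [h1 u hf.symm, h1 v hf]
  rcases (hs (f u)).lt_or_eq with hlt | h2u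
  · have := hr.one_lt_dist_of_ne_of_not_adj hne hadj
    omega
  · rw [h2u]
    refine hr.two_lt_dist_of_commonNeighbors_eq_empty hne hadj ?_
    refine Set.eq_empty_of_forall_notMem fun w hw => ?_
    obtain ⟨⟨-, hu | hu⟩, ⟨-, hv | hv⟩⟩ := (cyc n).mem_commonNeighbors.mp hw
    · exact hne (add_right_cancel (hu.symm.trans hv))
    · exact h2 u h2u (by rw [hf, hv, hu, add_assoc, one_add_one_eq_two])
    · exact h2 v (hf ▸ h2u) (by rw [← hf, hu, hv, add_assoc, one_add_one_eq_two])
    · exact hne (hu.trans hv.symm)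

/-- Vertex `a` gets class `0, 2, 1, 3` according to `a % 4`, i.e. the pattern `(1, 2_a, 1', 2_b)`;
when `4 ∤ n` this pattern does not close up around the cycle, so the last vertex gets class `4`. -/
def cycleColor (n a : ℕ) : ℕ :=
  if a + 1 = n ∧ n % 4 ≠ 0 then 4 else 2 * (a % 2) + a / 2 % 2

theorem cycleColor_lt_five (n a : ℕ) : cycleColor n a < 5 := by
  unfold cycleColor; split_ifs <;> omega

theorem cycleColor_lt_four {n : ℕ} (hn : n % 4 = 0) (a : ℕ) : cycleColor n a < 4 := by
  unfold cycleColor; split_ifs <;> omega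

theorem cycleColor_add_one_mod_ne {n a : ℕ} (hn : 1 < n) (ha : a < n) :
    cycleColor n ((a + 1) % n) ≠ cycleColor n a := by
  rw [Nat.add_mod_eq_ite, Nat.mod_eq_of_lt ha, Nat.mod_eq_of_lt hn]
  unfold cycleColor; split_ifs <;> omega

theorem cycleColor_add_two_mod_ne {n a : ℕ} (hn : 2 < n) (ha : a < n)
    (h : 2 ≤ cycleColor n a) : cycleColor n ((a + 2) % n) ≠ cycleColor n a := by
  rw [Nat.add_mod_eq_ite, Nat.mod_eq_of_lt ha, Nat.mod_eq_of_lt hn]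
  unfold cycleColor at h ⊢; split_ifs at h ⊢ <;> omega

def cycleColoring (n : ℕ) (u : ZMod n) : Fin 5 :=
  ⟨cycleColor n u.val, cycleColor_lt_five n u.val⟩

theorem cycleColoring_isPackingColoring {n : ℕ} (hn : 3 ≤ n) :
    IsPackingColoring (cyc n) ![1, 1, 2, 2, 2] (cycleColoring n) := by
  have : NeZero n := ⟨by omega⟩
  have hs : ∀ i : Fin 5, ![1, 1, 2, 2, 2] i = 2 → 2 ≤ (i : ℕ) := by decide
  refine isPackingColoring_cyc (by decide) (fun u => ?_) (fun u hu => ?_)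
  · rw [cycleColoring, cycleColoring, ne_eq, Fin.mk.injEq, ZMod.val_add, ZMod.val_one_eq_one_mod,
      Nat.add_mod_mod]
    exact cycleColor_add_one_mod_ne (by omega) u.val_lt
  · rw [cycleColoring, cycleColoring, ne_eq, Fin.mk.injEq, ZMod.val_add, ZMod.val_ofNat,
      Nat.add_mod_mod]
    exact cycleColor_add_two_mod_ne hn u.val_lt (hs _ hu)

/-- Every cycle `C_n` (`n ≥ 3`) is `(1,1,2,2,2)`-packing colorable, and is even
`(1,1,2,2)`-packing colorable when `n ≡ 0 (mod 4)`. -/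
theorem cycle_packing_colorable (n : ℕ) (hn : 3 ≤ n) :
    (∃ f : ZMod n → Fin 5, IsPackingColoring (cyc n) ![1, 1, 2, 2, 2] f) ∧
    (n % 4 = 0 → ∃ f : ZMod n → Fin 4, IsPackingColoring (cyc n) ![1, 1, 2, 2] f) := by
  refine ⟨⟨cycleColoring n, cycleColoring_isPackingColoring hn⟩, fun h4 => ?_⟩
  refine ⟨fun u => ⟨cycleColor n u.val, cycleColor_lt_four h4 u.val⟩, ?_⟩
  exact (cycleColoring_isPackingColoring hn).of_comp (e := Fin.castSucc) (by decide)
end
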